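/- Let r be a positive integer and let σ₁, …, σ_r be strictly positive real numbers, not all equal to 1. Define J : [0,1] → ℝ by J(γ) = (1/2) ∑_{i=1}^{r} (σᵢ^{2γ} + σᵢ^{2(1-γ)}). Then γ = 1/2 is the unique minimizer of J on [0,1]: for every γ ∈ [0,1] with γ ≠ 1/2, J(γ) > J(1/2). -/
import Mathlib

lemma bsum_key (x γ : ℝ) (hx : 0 < x) :
    x ^ (2 * γ) + x ^ (2 * (1 - γ)) = 2 * x + (x ^ γ - x ^ (1 - γ)) ^ 2 := by
  have h1 : x ^ (2 * γ) = (x ^ γ) ^ 2 := by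
    rw [← Real.rpow_natCast (x ^ γ) 2, ← Real.rpow_mul hx.le]
    norm_num [mul_comm]
  have h2 : x ^ (2 * (1 - γ)) = (x ^ (1 - γ)) ^ 2 := by
    rw [← Real.rpow_natCast (x ^ (1 - γ)) 2, ← Real.rpow_mul hx.le]
    norm_num [mul_comm]
  have hab : x ^ γ * x ^ (1 - γ) = x := by
    rw [← Real.rpow_add hx]
    norm_num
  rw [h1, h2]; nlinarith [hab]

lemma bsum_ne (x γ : ℝ) (hx : 0 < x) (hx1 : x ≠ 1) (hγ : γ ≠ 1 / 2) :
    x ^ γ ≠ x ^ (1 - γ) := by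
  intro h
  have hlog : γ * Real.log x = (1 - γ) * Real.log x := by
    have := congrArg Real.log h
    rwa [Real.log_rpow hx, Real.log_rpow hx] at this
  have hlx : Real.log x ≠ 0 := Real.log_ne_zero_of_pos_of_ne_one hx hx1
  have h2 : (2 * γ - 1) * Real.log x = 0 := by linarith
  rcases mul_eq_zero.mp h2 with h | h
  · apply hγ; linarith
  · exact hlx h

/-- Uniqueness of the balanced split: if σ₁,…,σ_r > 0 are not all equal to 1, then
`J(γ) = (1/2) ∑ᵢ (σᵢ^{2γ} + σᵢ^{2(1-γ)})` is strictly minimized on `[0,1]` only at `γ = 1/2`. -/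
theorem balanced_scales_unique_min (r : ℕ) (hr : 0 < r) (σ : Fin r → ℝ)
    (hσ : ∀ i, 0 < σ i) (hne : ∃ i, σ i ≠ 1) (J : ℝ → ℝ)
    (hJ : ∀ γ : ℝ, J γ = (1 / 2) * ∑ i, (σ i ^ (2 * γ) + σ i ^ (2 * (1 - γ)))) :
    ∀ γ ∈ Set.Icc (0 : ℝ) 1, γ ≠ 1 / 2 → J (1 / 2) < J γ := by
  intro γ hγmem hγne
  rw [hJ, hJ]
  have hhalf : ∀ i : Fin r,
      σ i ^ (2 * (1 / 2 : ℝ)) + σ i ^ (2 * (1 - 1 / 2 : ℝ)) = 2 * σ i := by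
    intro i
    norm_num
    ring
  have hsum : ∑ i, (σ i ^ (2 * (1 / 2 : ℝ)) + σ i ^ (2 * (1 - 1 / 2 : ℝ)))
      < ∑ i, (σ i ^ (2 * γ) + σ i ^ (2 * (1 - γ))) := by
    apply Finset.sum_lt_sum
    · intro i _
      rw [hhalf i, bsum_key _ _ (hσ i)]
      nlinarith [sq_nonneg (σ i ^ γ - σ i ^ (1 - γ))]
    · obtain ⟨i, hi⟩ := hne
      refine ⟨i, Finset.mem_univ i, ?_⟩
      rw [hhalf i, bsum_key _ _ (hσ i)]
      have := bsum_ne (σ i) γ (hσ i) hi hγne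
      have h2 : (σ i ^ γ - σ i ^ (1 - γ)) ^ 2 > 0 :=
        pow_pos (abs_pos.mpr (sub_ne_zero.mpr this)) 2 |>.trans_le (by rw [sq_abs])
      linarith
  linarith
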